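/- Fix β>0, λ>0, V_FCFS ≥ 1/2, V_PS > 0. For every s>0 define f(s) := μ_SR(s) via the quadratic-root formula and g(s) := μ_DM(s) = β(λ + V_PS/s). Then both f and g are strictly decreasing functions of s on (0,∞). -/

import Mathlib

/-!
In terms of `t = 1/s`, `μ_SR = β(λ + t)/2 + √(β²(λ²/4 + t²/4 + λ(V_FCFS - 1/2)t))`: the linear
part is strictly increasing in `t`, and for `V_FCFS ≥ 1/2` so is the radicand on `t ≥ 0`.
Since `t = 1/s` is strictly decreasing, `μ_SR` is strictly decreasing in `s`; `μ_DM` is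
visibly so.
-/

open Real Set

/-- `μ_SR(1/t)`. -/
noncomputable def srRateInv (β lam V t : ℝ) : ℝ :=
  β*(lam+t)/2 + √(β^2*((lam+t)^2/4 + lam*(V-1)*t))

theorem strictMonoOn_srRateInv {β lam V : ℝ} (hβ : 0 < β) (hlam : 0 ≤ lam) (hV : 1/2 ≤ V) :
    StrictMonoOn (srRateInv β lam V) (Ici 0) := by
  intro t₁ ht₁ t₂ _ ht
  have hrad : β^2*((lam+t₁)^2/4 + lam*(V-1)*t₁) ≤ β^2*((lam+t₂)^2/4 + lam*(V-1)*t₂) := by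
    have hlamV : 0 ≤ lam * (V - 1/2) := mul_nonneg hlam (by linarith)
    have ht₁ : (0:ℝ) ≤ t₁ := ht₁
    gcongr β^2 * ?_
    nlinarith
  exact add_lt_add_of_lt_of_le (by gcongr) (sqrt_le_sqrt hrad)

theorem srRate_eq_srRateInv {β lam V s : ℝ} (hs : 0 < s) :
    ((s*lam+1)*β + √((s*lam+1)^2*β^2 + 4*s*lam*β^2*(V-1))) / (2*s) = srRateInv β lam V s⁻¹ := by
  have hrad : β^2*((lam+s⁻¹)^2/4 + lam*(V-1)*s⁻¹)
      = ((s*lam+1)^2*β^2 + 4*s*lam*β^2*(V-1)) / (2*s)^2 := by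
    field_simp
    ring
  rw [srRateInv, hrad, sqrt_div' _ (by positivity), sqrt_sq (by positivity)]
  field_simp

theorem controls_strictly_decreasing (β lam VFCFS VPS : ℝ)
    (hβ : 0 < β) (hlam : 0 < lam) (hVF : 1/2 ≤ VFCFS) (hVP : 0 < VPS) :
    let μSR := fun s : ℝ =>
      ((s*lam+1)*β + Real.sqrt ((s*lam+1)^2*β^2 + 4*s*lam*β^2*(VFCFS-1))) / (2*s)
    let μDM := fun s : ℝ => β * (lam + VPS/s)
    StrictAntiOn μSR (Set.Ioi 0) ∧ StrictAntiOn μDM (Set.Ioi 0) := by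
  intro μSR μDM
  constructor
  · have hinv : StrictAntiOn (srRateInv β lam VFCFS ∘ (·⁻¹)) (Ioi 0) :=
      (strictMonoOn_srRateInv hβ hlam.le hVF).comp_strictAntiOn strictAntiOn_inv_pos
        fun _ hs => mem_Ici.2 (inv_pos.2 hs).le
    exact hinv.congr fun s hs => (srRate_eq_srRateInv hs).symm
  · intro s₁ hs₁ s₂ _ hs
    have hs₁ : 0 < s₁ := hs₁
    show β * (lam + VPS/s₂) < β * (lam + VPS/s₁)
    gcongr
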